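/- The generating function identity ∑_{k=0}^∞ S_{m,k}(∞) t^{mk} = ∏_{n=1}^∞ n^m/(n^m − t^m) holds for integer m ≥ 2 and |t| < 1, where the infinite product converges absolutely. -/

import Mathlib

open scoped BigOperators

noncomputable def Sfin (a : ℝ) : ℕ → ℕ → ℝ
  | 0, _ => 1
  | k+1, N => ∑ n ∈ Finset.Icc 1 N, ((n : ℝ) ^ a)⁻¹ * Sfin a k n

noncomputable def Sinf (a : ℝ) : ℕ → ℝ
  | 0 => 1
  | k+1 => ∑' n : ℕ+, ((n : ℝ) ^ a)⁻¹ * Sfin a k n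

lemma Sfin_nonneg (a : ℝ) : ∀ k N, 0 ≤ Sfin a k N := by
  intro k
  induction k with
  | zero => intro N; simp [Sfin]
  | succ k ih =>
    intro N
    rw [Sfin]
    refine Finset.sum_nonneg fun n _ => mul_nonneg (inv_nonneg.2 (Real.rpow_nonneg (by positivity) _)) (ih n)

lemma Sfin_one (a : ℝ) : ∀ k, Sfin a k 1 = 1 := by
  intro k
  induction k with
  | zero => simp [Sfin]
  | succ k ih => simp [Sfin, ih]

lemma inv_rpow_le (m : ℕ) (hm : 2 ≤ m) (n : ℕ) (hn : 1 ≤ n) :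
    ((n : ℝ) ^ (m : ℝ))⁻¹ ≤ ((n : ℝ) ^ 2)⁻¹ := by
  rw [Real.rpow_natCast]
  apply inv_anti₀ (by positivity)
  exact pow_le_pow_right₀ (by exact_mod_cast hn) hm

lemma telescope_bound : ∀ N : ℕ, ∑ n ∈ Finset.Icc 2 N, ((n : ℝ) ^ 2)⁻¹ ≤ 3/4 := by
  have key : ∀ N : ℕ, 2 ≤ N → ∑ n ∈ Finset.Icc 2 N, ((n : ℝ) ^ 2)⁻¹ ≤ 3/4 - (N : ℝ)⁻¹ := by
    intro N hN
    induction N, hN using Nat.le_induction with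
    | base => norm_num
    | succ N hN ih =>
      rw [Finset.sum_Icc_succ_top (by omega)]
      have hN' : (0:ℝ) < N := by positivity
      have h1 : ((N:ℝ)+1)⁻¹ + (((N:ℝ)+1) ^ 2)⁻¹ ≤ (N:ℝ)⁻¹ := by
        rw [inv_add_inv (by positivity) (by positivity), div_le_iff₀ (by positivity),
          inv_mul_eq_div, le_div_iff₀ (by positivity)]
        nlinarith
      push_cast
      linarith
  intro N
  rcases le_or_gt 2 N with h | h
  · have := key N h
    have : (0:ℝ) < (N:ℝ)⁻¹ := by positivity
    linarith [key N h]
  · interval_cases N <;> norm_num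

lemma Sfin_le_four (m : ℕ) (hm : 2 ≤ m) : ∀ k N, Sfin m k N ≤ 4 := by
  intro k
  induction k with
  | zero => intro N; rw [Sfin]; norm_num
  | succ k ih =>
    intro N
    rw [Sfin]
    rcases Nat.eq_zero_or_pos N with rfl | hN
    · simp
    · have hsplit : Finset.Icc 1 N = Finset.cons 1 (Finset.Ioc 1 N) (by simp) := by
        rw [Finset.Icc_eq_cons_Ioc hN]
      rw [hsplit, Finset.sum_cons]
      have h1 : ((1 : ℕ) : ℝ) ^ (m:ℝ) = 1 := by norm_num
      have hIoc : Finset.Ioc 1 N = Finset.Icc 2 N := by rw [← Finset.Icc_add_one_left_eq_Ioc]; rfl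
      have hle : ∑ n ∈ Finset.Ioc 1 N, ((n : ℝ) ^ (m:ℝ))⁻¹ * Sfin m k n
          ≤ ∑ n ∈ Finset.Ioc 1 N, ((n : ℝ) ^ 2)⁻¹ * 4 := by
        refine Finset.sum_le_sum fun n hn => ?_
        have hn1 : 1 ≤ n := le_of_lt (Finset.mem_Ioc.1 hn).1
        exact mul_le_mul (inv_rpow_le m hm n hn1) (ih n) (Sfin_nonneg _ _ _)
          (inv_nonneg.2 (by positivity))
      have hsum : ∑ n ∈ Finset.Ioc 1 N, ((n : ℝ) ^ 2)⁻¹ * 4 ≤ 3 := by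
        rw [← Finset.sum_mul, hIoc]
        have := telescope_bound N
        nlinarith [telescope_bound N]
      rw [h1, Sfin_one, inv_one, one_mul]
      linarith

lemma summable_pnat_sq : Summable (fun n : ℕ+ => (((n : ℕ) : ℝ) ^ 2)⁻¹) := by
  have h : Summable (fun n : ℕ => ((n : ℝ) ^ 2)⁻¹) := by
    simpa [one_div] using Real.summable_one_div_nat_pow.2 (le_refl 2)
  exact h.comp_injective (fun a b hab => PNat.coe_injective hab)

lemma summable_g (m : ℕ) (hm : 2 ≤ m) (k : ℕ) :
    Summable (fun n : ℕ+ => (((n : ℕ) : ℝ) ^ (m:ℝ))⁻¹ * Sfin m k n) := by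
  refine Summable.of_nonneg_of_le (fun n => mul_nonneg (inv_nonneg.2 (by positivity)) (Sfin_nonneg _ _ _))
    (fun n => ?_) (summable_pnat_sq.mul_right 4)
  exact mul_le_mul (inv_rpow_le m hm n n.one_le) (Sfin_le_four m hm k n) (Sfin_nonneg _ _ _)
    (inv_nonneg.2 (by positivity))

lemma sfin_eq_partial (m : ℕ) (k N : ℕ) :
    ∑ i ∈ Finset.range N, ((((i.succPNat : ℕ+) : ℕ) : ℝ) ^ (m:ℝ))⁻¹ * Sfin m k (i.succPNat : ℕ+)
      = Sfin m (k+1) N := by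
  rw [Sfin]
  rw [show Finset.Icc 1 N = Finset.Ico 1 (N+1) by rw [Finset.Ico_add_one_right_eq_Icc]]
  rw [Finset.sum_Ico_eq_sum_range]
  simp [Nat.succPNat, add_comm]

lemma tendsto_Sfin (m : ℕ) (hm : 2 ≤ m) (k : ℕ) :
    Filter.Tendsto (fun N => Sfin m k N) Filter.atTop (nhds (Sinf m k)) := by
  cases k with
  | zero => simp only [Sfin, Sinf]; exact tendsto_const_nhds
  | succ k =>
    have hs := (summable_g m hm k).hasSum
    rw [show Sinf m (k+1) = ∑' n : ℕ+, (((n:ℕ) : ℝ) ^ (m:ℝ))⁻¹ * Sfin m k n from rfl]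
    have he := (Equiv.pnatEquivNat.symm.hasSum_iff).2 hs
    have ht := he.tendsto_sum_nat
    refine ht.congr fun N => ?_
    simpa using sfin_eq_partial m k N

lemma csummable (m : ℕ) (hm : 2 ≤ m) (x : ℂ) (hx : ‖x‖ < 1) (N : ℕ) :
    Summable (fun k : ℕ => ((Sfin m k N : ℝ) : ℂ) * x ^ k) := by
  refine Summable.of_norm_bounded
    ((summable_geometric_of_lt_one (norm_nonneg x) hx).mul_left 4) fun k => ?_
  rw [norm_mul, norm_pow, Complex.norm_real, Real.norm_eq_abs,
    abs_of_nonneg (Sfin_nonneg _ _ _)]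
  exact mul_le_mul_of_nonneg_right (Sfin_le_four m hm k N) (by positivity)

lemma pow_sub_ne (m : ℕ) (x : ℂ) (hx : ‖x‖ < 1) (n : ℕ) (hn : 1 ≤ n) :
    ((n : ℂ) ^ m - x) ≠ 0 := by
  intro h
  have hxe : x = (n : ℂ) ^ m := by linear_combination -h
  rw [hxe, norm_pow, Complex.norm_natCast] at hx
  have : (1:ℝ) ≤ (n:ℝ) ^ m := one_le_pow₀ (by exact_mod_cast hn)
  linarith

lemma cast_inv_rpow (m N : ℕ) :
    (Complex.ofReal ((((N : ℕ) : ℝ)) ^ (m : ℝ))⁻¹) = (((N : ℂ)) ^ m)⁻¹ := by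
  rw [Real.rpow_natCast]
  push_cast
  ring

lemma key_identity (m : ℕ) (hm : 2 ≤ m) (x : ℂ) (hx : ‖x‖ < 1) :
    ∀ N : ℕ, (∑' k : ℕ, ((Sfin m k N : ℝ) : ℂ) * x ^ k) *
      ∏ n ∈ Finset.Icc 1 N, (1 - x * (((n : ℂ)) ^ m)⁻¹) = 1 := by
  intro N
  induction N with
  | zero =>
    have h0 : (∑' k : ℕ, ((Sfin m k 0 : ℝ) : ℂ) * x ^ k) = 1 := by
      rw [tsum_eq_single 0]
      · simp [Sfin]
      · intro k hk
        cases k with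
        | zero => exact absurd rfl hk
        | succ k => simp [Sfin]
    simp [h0]
  | succ N ih =>
    set c : ℂ := (((N + 1 : ℕ) : ℂ) ^ m)⁻¹ with hc
    have hprod : ∏ n ∈ Finset.Icc 1 (N + 1), (1 - x * (((n : ℂ)) ^ m)⁻¹)
        = (∏ n ∈ Finset.Icc 1 N, (1 - x * (((n : ℂ)) ^ m)⁻¹)) * (1 - x * c) := by
      rw [Finset.prod_Icc_succ_top (by omega)]
    have hu := csummable m hm x hx (N + 1)
    have hu' : Summable (fun k : ℕ => ((Sfin m (k+1) (N+1) : ℝ) : ℂ) * x ^ (k+1)) :=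
      hu.comp_injective Nat.succ_injective
    have huN := csummable m hm x hx N
    have huN' : Summable (fun k : ℕ => ((Sfin m (k+1) N : ℝ) : ℂ) * x ^ (k+1)) :=
      huN.comp_injective Nat.succ_injective
    have hzero1 : (∑' k : ℕ, ((Sfin m k (N+1) : ℝ) : ℂ) * x ^ k)
        = 1 + ∑' k : ℕ, ((Sfin m (k+1) (N+1) : ℝ) : ℂ) * x ^ (k+1) := by
      rw [Summable.tsum_eq_zero_add hu, Sfin]
      norm_num
    have hzeroN : (∑' k : ℕ, ((Sfin m k N : ℝ) : ℂ) * x ^ k)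
        = 1 + ∑' k : ℕ, ((Sfin m (k+1) N : ℝ) : ℂ) * x ^ (k+1) := by
      rw [Summable.tsum_eq_zero_add huN, Sfin]
      norm_num
    have hrec : ∀ k : ℕ, ((Sfin m (k+1) N : ℝ) : ℂ) * x ^ (k+1)
        = ((Sfin m (k+1) (N+1) : ℝ) : ℂ) * x ^ (k+1)
          - (x * c) * (((Sfin m k (N+1) : ℝ) : ℂ) * x ^ k) := by
      intro k
      have h1 : Sfin m (k+1) (N+1)
          = Sfin m (k+1) N + ((((N+1 : ℕ) : ℝ)) ^ (m:ℝ))⁻¹ * Sfin m k (N+1) := by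
        rw [Sfin, Finset.sum_Icc_succ_top (by omega), ← Sfin]
      have h2 : ((Sfin m (k+1) (N+1) : ℝ) : ℂ)
          = ((Sfin m (k+1) N : ℝ) : ℂ) + c * ((Sfin m k (N+1) : ℝ) : ℂ) := by
        rw [h1, Complex.ofReal_add, Complex.ofReal_mul, cast_inv_rpow m (N+1), hc]
      rw [h2]
      ring
    have hsub : (∑' k : ℕ, ((Sfin m (k+1) N : ℝ) : ℂ) * x ^ (k+1))
        = (∑' k : ℕ, ((Sfin m (k+1) (N+1) : ℝ) : ℂ) * x ^ (k+1))
          - (x * c) * (∑' k : ℕ, ((Sfin m k (N+1) : ℝ) : ℂ) * x ^ k) := by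
      rw [← tsum_mul_left, ← Summable.tsum_sub hu' (hu.mul_left (x * c))]
      exact tsum_congr hrec
    have hmain : (∑' k : ℕ, ((Sfin m k N : ℝ) : ℂ) * x ^ k)
        = (∑' k : ℕ, ((Sfin m k (N+1) : ℝ) : ℂ) * x ^ k) * (1 - x * c) := by
      rw [hzeroN, hsub, hzero1]
      ring
    rw [hprod, show (∑' k : ℕ, ((Sfin m k (N+1) : ℝ) : ℂ) * x ^ k) *
        ((∏ n ∈ Finset.Icc 1 N, (1 - x * (((n : ℂ)) ^ m)⁻¹)) * (1 - x * c))
      = ((∑' k : ℕ, ((Sfin m k (N+1) : ℝ) : ℂ) * x ^ k) * (1 - x * c)) *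
        ∏ n ∈ Finset.Icc 1 N, (1 - x * (((n : ℂ)) ^ m)⁻¹) from by ring, ← hmain]
    exact ih

lemma partial_eq (m : ℕ) (hm : 2 ≤ m) (x : ℂ) (hx : ‖x‖ < 1) (N : ℕ) :
    (∑' k : ℕ, ((Sfin m k N : ℝ) : ℂ) * x ^ k)
      = ∏ n ∈ Finset.Icc 1 N, ((n : ℂ) ^ m / ((n : ℂ) ^ m - x)) := by
  have hQ : (∏ n ∈ Finset.Icc 1 N, (1 - x * (((n : ℂ)) ^ m)⁻¹)) *
      (∏ n ∈ Finset.Icc 1 N, ((n : ℂ) ^ m / ((n : ℂ) ^ m - x))) = 1 := by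
    rw [← Finset.prod_mul_distrib]
    apply Finset.prod_eq_one
    intro n hn
    have hn1 : 1 ≤ n := (Finset.mem_Icc.1 hn).1
    have h1 : ((n : ℂ) ^ m) ≠ 0 := by
      apply pow_ne_zero
      have : (0:ℕ) < n := hn1
      exact_mod_cast this.ne'
    have h2 := pow_sub_ne m x hx n hn1
    field_simp
  calc (∑' k : ℕ, ((Sfin m k N : ℝ) : ℂ) * x ^ k)
      = (∑' k : ℕ, ((Sfin m k N : ℝ) : ℂ) * x ^ k) *
        ((∏ n ∈ Finset.Icc 1 N, (1 - x * (((n : ℂ)) ^ m)⁻¹)) *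
          (∏ n ∈ Finset.Icc 1 N, ((n : ℂ) ^ m / ((n : ℂ) ^ m - x)))) := by rw [hQ, mul_one]
    _ = ((∑' k : ℕ, ((Sfin m k N : ℝ) : ℂ) * x ^ k) *
          (∏ n ∈ Finset.Icc 1 N, (1 - x * (((n : ℂ)) ^ m)⁻¹))) *
          (∏ n ∈ Finset.Icc 1 N, ((n : ℂ) ^ m / ((n : ℂ) ^ m - x))) := by ring
    _ = ∏ n ∈ Finset.Icc 1 N, ((n : ℂ) ^ m / ((n : ℂ) ^ m - x)) := by
          rw [key_identity m hm x hx N, one_mul]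

lemma mult_lemma (m : ℕ) (hm : 2 ≤ m) (x : ℂ) (hx : ‖x‖ < 1) :
    Multipliable (fun n : ℕ+ => (n : ℂ) ^ m / ((n : ℂ) ^ m - x)) := by
  set z : ℕ+ → ℂ := fun n => x / ((n : ℂ) ^ m - x) with hz
  have hone : (0:ℝ) < 1 - ‖x‖ := by linarith
  have hne : ∀ n : ℕ+, ((n : ℂ) ^ m - x) ≠ 0 := fun n => pow_sub_ne m x hx n n.one_le
  have hden : ∀ n : ℕ+, ((n:ℕ):ℝ) ^ m * (1 - ‖x‖) ≤ ‖(n : ℂ) ^ m - x‖ := by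
    intro n
    have h1 : ‖((n : ℂ)) ^ m‖ - ‖x‖ ≤ ‖(n : ℂ) ^ m - x‖ := norm_sub_norm_le _ _
    have h2 : ‖((n : ℂ)) ^ m‖ = ((n:ℕ):ℝ) ^ m := by
      rw [norm_pow]; norm_num
    have h3 : (1:ℝ) ≤ ((n:ℕ):ℝ) ^ m := one_le_pow₀ (by exact_mod_cast n.one_le)
    nlinarith [norm_nonneg x]
  have hzb : ∀ n : ℕ+, ‖z n‖ ≤ (‖x‖ / (1 - ‖x‖)) * (((n:ℕ):ℝ) ^ 2)⁻¹ := by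
    intro n
    have h2m : ((n:ℕ):ℝ) ^ 2 ≤ ((n:ℕ):ℝ) ^ m := pow_le_pow_right₀ (by exact_mod_cast n.one_le) hm
    have hp : (0:ℝ) < ((n:ℕ):ℝ) ^ 2 := by positivity
    rw [hz, norm_div]
    calc ‖x‖ / ‖(n : ℂ) ^ m - x‖ ≤ ‖x‖ / (((n:ℕ):ℝ) ^ m * (1 - ‖x‖)) := by
          gcongr
          · exact hden n
      _ = (‖x‖ / (1 - ‖x‖)) * (((n:ℕ):ℝ) ^ m)⁻¹ := by
          rw [div_mul_eq_div_div_swap, div_eq_mul_inv]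
      _ ≤ (‖x‖ / (1 - ‖x‖)) * (((n:ℕ):ℝ) ^ 2)⁻¹ := by
          gcongr
  have hzsum : Summable (fun n : ℕ+ => ‖z n‖) :=
    Summable.of_nonneg_of_le (fun n => norm_nonneg _) hzb (summable_pnat_sq.mul_left _)
  have hzs : Summable z := hzsum.of_norm
  have hcong : ∀ n : ℕ+, (n : ℂ) ^ m / ((n : ℂ) ^ m - x) = 1 + z n := by
    intro n
    show _ = 1 + x / ((n : ℂ) ^ m - x)
    rw [one_add_div (hne n)]
    congr 1
    ring
  have hnz : ∀ n : ℕ+, (1 : ℂ) + z n ≠ 0 := by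
    intro n
    rw [← hcong n]
    apply div_ne_zero _ (hne n)
    apply pow_ne_zero
    exact_mod_cast n.pos.ne'
  have hlog : Summable (fun n : ℕ+ => Complex.log (1 + z n)) := by
    have h0 : Filter.Tendsto z Filter.cofinite (nhds 0) := hzs.tendsto_cofinite_zero
    have hev : ∀ᶠ n in Filter.cofinite, ‖z n‖ ≤ 1/2 := by
      have := Metric.tendsto_nhds.mp h0 (1/2) (by norm_num)
      refine this.mono fun n hn => ?_
      rw [dist_zero_right] at hn
      exact le_of_lt hn
    refine Summable.of_norm_bounded_eventually (hzsum.mul_left (3/2)) ?_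
    exact hev.mono fun n hn => Complex.norm_log_one_add_half_le_self hn
  have hmult : Multipliable (fun n : ℕ+ => (1 : ℂ) + z n) :=
    Complex.multipliable_of_summable_log hlog
  exact Multipliable.congr hmult fun n => (hcong n).symm

/-- for integer `m ≥ 2` and `|t| < 1`,
`∑ₖ S_{m,k}(∞) t^{mk} = ∏_{n=1}^∞ nᵐ/(nᵐ - tᵐ)`, the infinite product converging. -/
theorem statement19 (m : ℕ) (hm : 2 ≤ m) (t : ℂ) (ht : ‖t‖ < 1) :
    Multipliable (fun n : ℕ+ => (n : ℂ) ^ m / ((n : ℂ) ^ m - t ^ m)) ∧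
    ∑' k : ℕ, (Sinf m k : ℂ) * t ^ (m * k) =
      ∏' n : ℕ+, (n : ℂ) ^ m / ((n : ℂ) ^ m - t ^ m) := by
  have hnt : ‖t‖ < 1 := by exact ht
  set x := t ^ m with hxdef
  have hx : ‖x‖ < 1 := by
    rw [hxdef, norm_pow]
    exact pow_lt_one₀ (norm_nonneg t) hnt (by omega)
  refine ⟨mult_lemma m hm x hx, ?_⟩
  have hL : ∑' k : ℕ, (Sinf m k : ℂ) * t ^ (m * k) = ∑' k : ℕ, ((Sinf m k : ℝ) : ℂ) * x ^ k := by
    refine tsum_congr fun k => ?_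
    rw [hxdef, ← pow_mul]
  rw [hL]
  have hlim1 : Filter.Tendsto (fun N => ∑' k : ℕ, ((Sfin m k N : ℝ) : ℂ) * x ^ k) Filter.atTop
      (nhds (∑' k : ℕ, ((Sinf m k : ℝ) : ℂ) * x ^ k)) := by
    apply tendsto_tsum_of_dominated_convergence (bound := fun k => 4 * ‖x‖ ^ k)
      ((summable_geometric_of_lt_one (norm_nonneg x) hx).mul_left 4)
    · intro k
      exact ((Complex.continuous_ofReal.tendsto _).comp (tendsto_Sfin m hm k)).mul_const _
    · apply Filter.Eventually.of_forall
      intro N k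
      rw [norm_mul, norm_pow, Complex.norm_real, Real.norm_eq_abs,
        abs_of_nonneg (Sfin_nonneg _ _ _)]
      exact mul_le_mul_of_nonneg_right (Sfin_le_four m hm k N) (by positivity)
  have hM := mult_lemma m hm x hx
  have hp := (Equiv.pnatEquivNat.symm.hasProd_iff).2 hM.hasProd
  have hlim2 := hp.tendsto_prod_nat
  have hswitch : ∀ N : ℕ, ∏ i ∈ Finset.range N,
      ((Nat.succPNat i : ℂ)) ^ m / (((Nat.succPNat i : ℂ)) ^ m - x)
      = ∑' k : ℕ, ((Sfin m k N : ℝ) : ℂ) * x ^ k := by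
    intro N
    rw [partial_eq m hm x hx N,
      show Finset.Icc 1 N = Finset.Ico 1 (N+1) by rw [Finset.Ico_add_one_right_eq_Icc],
      Finset.prod_Ico_eq_prod_range]
    simp [Nat.succPNat, add_comm]
  have hlim2' : Filter.Tendsto (fun N => ∑' k : ℕ, ((Sfin m k N : ℝ) : ℂ) * x ^ k) Filter.atTop
      (nhds (∏' n : ℕ+, (n : ℂ) ^ m / ((n : ℂ) ^ m - x))) := by
    refine hlim2.congr fun N => ?_
    simpa using hswitch N
  exact tendsto_nhds_unique hlim1 hlim2'
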